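/- arXiv:2301.11242 — 4 statements merged into one kernel-verified Lean document; each statement's English description precedes it below -/
import Mathlib

section
/- For every x ∈ ℕ^n and k ∈ ℕ, the language S_{x,k} is disjoint from the infinite Dyck language D_n. That is, if an infinite word w decomposes as w = u v_1 v_2 ⋯ with ⟨x, φ(v_ℓ)⟩ ≤ −1 for all ℓ ≥ 1, then some finite prefix p of w has φ_i(p) < 0 for some i ∈ [1,n]. -/
/-- The alphabet Σ_n: letter `(i, true)` is `a_i`, `(i, false)` is `ā_i`. -/
abbrev Alph (n : ℕ) := Fin n × Bool

abbrev Word (n : ℕ) := List (Alph n)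

/-- The balance function φ_i(w) = |w|_{a_i} - |w|_{ā_i}. -/
def phi {n : ℕ} (w : Word n) (i : Fin n) : ℤ :=
  (w.count (i, true) : ℤ) - (w.count (i, false) : ℤ)

/-- The prefix of length k of an infinite word. -/
def pre {A : Type*} (w : ℕ → A) (k : ℕ) : List A := (List.range k).map w

/-- The (finite) infix w[p..q) of an infinite word. -/
def seg {A : Type*} (w : ℕ → A) (p q : ℕ) : List A :=
  (List.range (q - p)).map (fun j => w (p + j))

/-- The weighted balance ⟨x, φ(w)⟩. -/
def wbal {n : ℕ} (x : Fin n → ℕ) (w : Word n) : ℤ :=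
  ∑ i, (x i : ℤ) * phi w i

/-- The basic separator P_{i,k}: words with a prefix u of negative i-balance all of whose
prefixes have i-balance at most k. -/
def Pset {n : ℕ} (i : Fin n) (k : ℤ) : Set (ℕ → Alph n) :=
  {w | ∃ m : ℕ, phi (pre w m) i < 0 ∧ ∀ j ≤ m, phi (pre w j) i ≤ k}

/-- The basic separator S_{x,k}: words decomposing as u v₁ v₂ ⋯ such that every infix of
v₁ v₂ ⋯ has x-weighted balance at most k and each v_ℓ has negative x-weighted balance. -/
def Sset {n : ℕ} (x : Fin n → ℕ) (k : ℤ) : Set (ℕ → Alph n) :=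
  {w | ∃ (u : Word n) (v : ℕ → Word n),
    (∀ ℓ, v ℓ ≠ []) ∧
    (∀ m : ℕ, pre w (u ++ ((List.range m).map v).flatten).length
        = u ++ ((List.range m).map v).flatten) ∧
    (∀ p q : ℕ, u.length ≤ p → p ≤ q → wbal x (seg w p q) ≤ k) ∧
    (∀ ℓ, wbal x (v ℓ) < 0)}

lemma phi_append {n : ℕ} (a b : Word n) (i : Fin n) :
    phi (a ++ b) i = phi a i + phi b i := by
  simp [phi, List.count_append]; ring

lemma wbal_append {n : ℕ} (x : Fin n → ℕ) (a b : Word n) :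
    wbal x (a ++ b) = wbal x a + wbal x b := by
  simp [wbal, phi_append, mul_add, Finset.sum_add_distrib]

lemma wbal_flatten {n : ℕ} (x : Fin n → ℕ) (v : ℕ → Word n) (m : ℕ) :
    wbal x ((List.range m).map v).flatten = ∑ ℓ ∈ Finset.range m, wbal x (v ℓ) := by
  induction m with
  | zero => simp [wbal, phi]
  | succ m ih =>
    rw [List.range_succ, List.map_append, List.flatten_append, wbal_append, ih,
      Finset.sum_range_succ]
    simp [wbal_append, wbal, phi]

/-- S_{x,k} is disjoint from the Dyck language D_n: if w = u v₁ v₂ ⋯ with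
⟨x, φ(v_ℓ)⟩ ≤ -1 for all ℓ, then some prefix p of w has φ_i(p) < 0 for some i. -/
theorem S_disjoint_dyck {n : ℕ} (x : Fin n → ℕ) (w : ℕ → Alph n)
    (u : Word n) (v : ℕ → Word n)
    (hdec : ∀ m : ℕ, pre w (u ++ ((List.range m).map v).flatten).length
        = u ++ ((List.range m).map v).flatten)
    (hneg : ∀ ℓ : ℕ, wbal x (v ℓ) ≤ -1) :
    ∃ (k : ℕ) (i : Fin n), phi (pre w k) i < 0 := by
  by_contra h
  push_neg at h
  set m := (wbal x u).toNat + 1 with hm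
  set L := u ++ ((List.range m).map v).flatten with hL
  have hpre := hdec m
  have hwb : wbal x L = wbal x u + ∑ ℓ ∈ Finset.range m, wbal x (v ℓ) := by
    rw [hL, wbal_append, wbal_flatten]
  have hsum : ∑ ℓ ∈ Finset.range m, wbal x (v ℓ) ≤ -(m : ℤ) := by
    calc ∑ ℓ ∈ Finset.range m, wbal x (v ℓ) ≤ ∑ ℓ ∈ Finset.range m, (-1 : ℤ) :=
          Finset.sum_le_sum (fun ℓ _ => hneg ℓ)
      _ = -(m : ℤ) := by simp
  have hneg' : wbal x L < 0 := by
    have : (wbal x u : ℤ) < (m : ℤ) := by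
      rw [hm]; push_cast
      exact lt_of_le_of_lt (Int.self_le_toNat _) (by linarith)
    omega
  have hnn : 0 ≤ wbal x L := by
    rw [hL, ← hpre]
    apply Finset.sum_nonneg
    intro i _
    exact mul_nonneg (by positivity) (h L.length i)
  omega
end

section
/- Let G be a finite directed graph with integer edge weights. If every primitive cycle has weight ≤ 0 and there exists a primitive cycle of weight < 0 whose edges all occur in a given closed walk σ, then the |σ|-fold repetition of σ has strictly negative weight; consequently σ itself has weight ≤ −1. -/
/-!
A closed walk σ, read as a multiset of edges, is balanced. The primitive cycle σ' uses each of
its edges once, so σ = σ' + K as multisets with K balanced. Every nonempty balanced multiset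
contains a primitive cycle (follow its edges until a vertex repeats), so peeling off cycles shows
that K has weight ≤ 0. Hence w(σ) = w(σ') + w(K) < 0, and the |σ|-fold repetition of σ has
weight |σ| · w(σ) < 0.
-/

/-- A list of edges forms a walk: consecutive edges are compatible. -/
def IsWalk {V E : Type*} (src tgt : E → V) (es : List E) : Prop :=
  es.Chain' (fun e f => tgt e = src f)

/-- A closed walk: a nonempty walk that ends where it starts. -/
def IsClosedWalk {V E : Type*} (src tgt : E → V) (es : List E) : Prop :=
  IsWalk src tgt es ∧ es ≠ [] ∧
    ∀ h : es ≠ [], tgt (es.getLast h) = src (es.head h)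

/-- A primitive (simple) cycle: a closed walk visiting no vertex twice except start/end. -/
def IsPrimitiveCycle {V E : Type*} (src tgt : E → V) (es : List E) : Prop :=
  IsClosedWalk src tgt es ∧ (es.map src).Nodup

/-- The total weight of a walk. -/
def walkWeight {E : Type*} (c : E → ℤ) (es : List E) : ℤ := (es.map c).sum

/-- In-degree equals out-degree at every vertex, as for the edge multiset of a union of closed
walks. -/
def IsBalanced {V E : Type*} (src tgt : E → V) (M : Multiset E) : Prop :=
  M.map src = M.map tgt

section

variable {V E : Type*} {src tgt : E → V}

namespace IsWalk

lemma map_tgt : ∀ {es : List E}, IsWalk src tgt es → ∀ hne : es ≠ [],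
    es.map tgt = (es.map src).tail ++ [tgt (es.getLast hne)]
  | [_], _, _ => rfl
  | e :: f :: rest, hw, _ => by
    obtain ⟨hef, hw⟩ := List.isChain_cons_cons.1 hw
    simp [map_tgt hw (List.cons_ne_nil f rest), hef]

lemma isClosedWalk_of_append_cons {seg rest : List E} {f : E}
    (hw : IsWalk src tgt (seg ++ f :: rest)) (hne : seg ≠ [])
    (hf : src f = src (seg.head hne)) : IsClosedWalk src tgt seg := by
  obtain ⟨hseg, -, hjoin⟩ := List.isChain_append.1 hw
  refine ⟨hseg, hne, fun _ => ?_⟩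
  rw [← hf]
  exact hjoin _ (List.getLast?_eq_some_getLast hne) f rfl

lemma exists_isClosedWalk_infix : ∀ {es : List E}, IsWalk src tgt es →
    ¬ (es.map src).Nodup →
    ∃ seg, IsClosedWalk src tgt seg ∧ seg <:+: es ∧ seg.length < es.length
  | [], _, hdup => absurd List.nodup_nil hdup
  | e :: es, hw, hdup => by
    by_cases he : src e ∈ es.map src
    · obtain ⟨f, hf, hfe⟩ := List.mem_map.1 he
      obtain ⟨b, d, rfl⟩ := List.append_of_mem hf
      refine ⟨e :: b, isClosedWalk_of_append_cons (rest := d) hw (List.cons_ne_nil e b) hfe,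
        ⟨[], f :: d, rfl⟩, by simp⟩
    · obtain ⟨seg, hseg, hinf, hlt⟩ :=
        exists_isClosedWalk_infix (es := es) hw.tail
          (fun hnd => hdup (List.nodup_cons.2 ⟨he, hnd⟩))
      exact ⟨seg, hseg, hinf.trans (List.suffix_cons e es).isInfix, Nat.lt_succ_of_lt hlt⟩

end IsWalk

namespace IsClosedWalk

lemma isBalanced : ∀ {es : List E}, IsClosedWalk src tgt es → IsBalanced src tgt es
  | [], ⟨_, hne, _⟩ => absurd rfl hne
  | e :: es, ⟨hw, hne, hclosed⟩ => by
    have hperm : ((e :: es).map tgt).Perm ((e :: es).map src) := by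
      rw [hw.map_tgt hne, hclosed hne]
      exact List.perm_append_singleton _ _
    exact (Multiset.coe_eq_coe.2 hperm).symm

lemma exists_isPrimitiveCycle_infix {es : List E} (h : IsClosedWalk src tgt es) :
    ∃ p, IsPrimitiveCycle src tgt p ∧ p <:+: es := by
  by_cases hnd : (es.map src).Nodup
  · exact ⟨es, ⟨h, hnd⟩, List.infix_refl es⟩
  · obtain ⟨seg, hseg, hinf, _⟩ := h.1.exists_isClosedWalk_infix hnd
    obtain ⟨p, hp, hpinf⟩ := hseg.exists_isPrimitiveCycle_infix
    exact ⟨p, hp, hpinf.trans hinf⟩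
termination_by es.length

end IsClosedWalk

lemma IsWalk.exists_isPrimitiveCycle_infix [Fintype V] {es : List E} (hw : IsWalk src tgt es)
    (hlen : Fintype.card V < es.length) : ∃ p, IsPrimitiveCycle src tgt p ∧ p <:+: es := by
  have hdup : ¬ (es.map src).Nodup := fun hnd => by
    have := hnd.length_le_card
    rw [List.length_map] at this
    omega
  obtain ⟨seg, hseg, hinf, -⟩ := hw.exists_isClosedWalk_infix hdup
  obtain ⟨p, hp, hpinf⟩ := hseg.exists_isPrimitiveCycle_infix
  exact ⟨p, hp, hpinf.trans hinf⟩

lemma IsPrimitiveCycle.coe_le_of_subset {p : List E} {M : Multiset E}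
    (hp : IsPrimitiveCycle src tgt p) (hpM : ∀ e ∈ p, e ∈ M) : (p : Multiset E) ≤ M :=
  (Multiset.le_iff_subset (Multiset.coe_nodup.2 (hp.2.of_map src))).2 hpM

lemma walkWeight_eq_sum_map_coe (c : E → ℤ) (es : List E) :
    walkWeight c es = ((es : Multiset E).map c).sum := rfl

lemma walkWeight_flatten_replicate (c : E → ℤ) (n : ℕ) (es : List E) :
    walkWeight c (List.replicate n es).flatten = n * walkWeight c es := by
  simp [walkWeight, List.map_flatten, List.sum_flatten, List.map_replicate, List.sum_replicate]

namespace IsBalanced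

lemma of_add {M K : Multiset E} (h : IsBalanced src tgt (M + K)) (hM : IsBalanced src tgt M) :
    IsBalanced src tgt K := by
  rw [IsBalanced, Multiset.map_add, Multiset.map_add, hM] at h
  exact add_left_cancel h

lemma exists_isWalk {M : Multiset E} (hM : IsBalanced src tgt M) (hne : M ≠ 0) (n : ℕ) :
    ∃ e es, IsWalk src tgt (e :: es) ∧ es.length = n ∧ ∀ x ∈ e :: es, x ∈ M := by
  induction n with
  | zero =>
    obtain ⟨e, he⟩ := Multiset.exists_mem_of_ne_zero hne
    exact ⟨e, [], List.isChain_singleton e, rfl, by simpa using he⟩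
  | succ n ih =>
    obtain ⟨e, es, hw, hlen, hmem⟩ := ih
    have : src e ∈ M.map tgt := hM ▸ Multiset.mem_map_of_mem src (hmem e List.mem_cons_self)
    obtain ⟨f, hf, hfe⟩ := Multiset.mem_map.1 this
    refine ⟨f, e :: es, List.isChain_cons_cons.2 ⟨hfe, hw⟩, by simp [hlen], ?_⟩
    rintro x (_ | ⟨_, hx⟩)
    exacts [hf, hmem x hx]

lemma exists_isPrimitiveCycle_le [Fintype V] {M : Multiset E} (hM : IsBalanced src tgt M)
    (hne : M ≠ 0) : ∃ p, IsPrimitiveCycle src tgt p ∧ (p : Multiset E) ≤ M := by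
  obtain ⟨e, es, hw, hlen, hmem⟩ := hM.exists_isWalk hne (Fintype.card V)
  obtain ⟨p, hp, hinf⟩ := hw.exists_isPrimitiveCycle_infix (by simp [hlen])
  exact ⟨p, hp, hp.coe_le_of_subset fun x hx => hmem x (hinf.subset hx)⟩

lemma sum_map_nonpos [Fintype V] {c : E → ℤ}
    (hprim : ∀ p, IsPrimitiveCycle src tgt p → walkWeight c p ≤ 0) {M : Multiset E}
    (hM : IsBalanced src tgt M) : (M.map c).sum ≤ 0 := by
  rcases eq_or_ne M 0 with rfl | hne
  · simp
  obtain ⟨p, hp, hle⟩ := hM.exists_isPrimitiveCycle_le hne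
  obtain ⟨K, rfl⟩ := Multiset.le_iff_exists_add.1 hle
  have : Multiset.card K < Multiset.card ((p : Multiset E) + K) := by
    simp [List.length_pos_iff.2 hp.1.2.1]
  have hK := (hM.of_add hp.1.isBalanced).sum_map_nonpos hprim
  have hpw := hprim p hp
  rw [walkWeight_eq_sum_map_coe] at hpw
  rw [Multiset.map_add, Multiset.sum_add]
  omega
termination_by Multiset.card M

end IsBalanced

end

/-- If every primitive cycle has weight ≤ 0 and some primitive cycle of weight < 0 has all
its edges occurring in the closed walk σ, then the |σ|-fold repetition of σ has strictly
negative weight; consequently σ has weight ≤ -1. -/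
theorem closed_walk_weight_neg {V E : Type*} [Fintype V]
    (src tgt : E → V) (c : E → ℤ)
    (hprim : ∀ es : List E, IsPrimitiveCycle src tgt es → walkWeight c es ≤ 0)
    (σ : List E) (hσ : IsClosedWalk src tgt σ)
    (σ' : List E) (hσ' : IsPrimitiveCycle src tgt σ')
    (hneg : walkWeight c σ' < 0)
    (hsub : ∀ e ∈ σ', e ∈ σ) :
    walkWeight c ((List.replicate σ.length σ).flatten) < 0 ∧ walkWeight c σ ≤ -1 := by
  obtain ⟨K, hK⟩ :=
    Multiset.le_iff_exists_add.1 (hσ'.coe_le_of_subset (M := σ) (by simpa using hsub))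
  have hKw : (K.map c).sum ≤ 0 :=
    ((hK ▸ hσ.isBalanced).of_add hσ'.1.isBalanced).sum_map_nonpos hprim
  have hσw : walkWeight c σ = walkWeight c σ' + (K.map c).sum := by
    rw [walkWeight_eq_sum_map_coe, walkWeight_eq_sum_map_coe, hK, Multiset.map_add,
      Multiset.sum_add]
  have hlen : (0 : ℤ) < σ.length := by exact_mod_cast List.length_pos_iff.2 hσ.2.1
  rw [walkWeight_flatten_replicate]
  exact ⟨mul_neg_of_pos_of_neg hlen (by omega), by omega⟩
end

section
/- Büchi pumping for separators: Let A be a Büchi automaton with n states whose language contains (a_1^n ā_1^{n+1})^ω. Then there exist m > n such that A also accepts (a_1^m ā_1^{n+1})^ω. Consequently, no Büchi automaton with n states can contain (a_1^n ā_1^{n+1})^ω in its language while remaining disjoint from D_1. -/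
/-- The periodic infinite word (a₁^m ā₁^k)^ω over Σ₁. -/
def perword (m k : ℕ) : ℕ → Alph 1 :=
  fun j => if j % (m + k) < m then ((0 : Fin 1), true) else ((0 : Fin 1), false)

/-- The Dyck language D_n of infinite words all of whose prefixes have nonnegative balances. -/
def Dyck (n : ℕ) : Set (ℕ → Alph n) :=
  {w | ∀ (K : ℕ) (i : Fin n), 0 ≤ phi (pre w K) i}

/-- A (nondeterministic) Büchi automaton over alphabet `A`. -/
structure Buchi (A : Type*) where
  State : Type
  fin : Fintype State
  init : State
  step : State → A → State → Prop
  final : Set State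

/-- Acceptance: some run from the initial state visits final states infinitely often. -/
def Buchi.Accepts {A : Type*} (B : Buchi A) (w : ℕ → A) : Prop :=
  ∃ ρ : ℕ → B.State, ρ 0 = B.init ∧ (∀ k, B.step (ρ k) (w k) (ρ (k + 1))) ∧
    ∀ N : ℕ, ∃ k, N ≤ k ∧ ρ k ∈ B.final

lemma mod_succ₁ {M k : ℕ} (h : k % M + 1 < M) :
    (k + 1) % M = k % M + 1 ∧ (k + 1) / M = k / M := by
  have hM : 0 < M := by omega
  have hd := Nat.div_add_mod k M
  constructor
  · conv_lhs => rw [← hd]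
    rw [show M * (k / M) + k % M + 1 = M * (k / M) + (k % M + 1) by ring,
      Nat.mul_add_mod, Nat.mod_eq_of_lt h]
  · conv_lhs => rw [← hd]
    rw [show M * (k / M) + k % M + 1 = M * (k / M) + (k % M + 1) by ring,
      Nat.mul_add_div hM, Nat.div_eq_of_lt h, Nat.add_zero]

lemma mod_succ₂ {M k : ℕ} (hM : 0 < M) (h : k % M + 1 = M) :
    (k + 1) % M = 0 ∧ (k + 1) / M = k / M + 1 := by
  have hd := Nat.div_add_mod k M
  have hk : k + 1 = M * (k / M + 1) := by
    rw [Nat.mul_add, Nat.mul_one]; omega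
  rw [hk]
  exact ⟨Nat.mul_mod_right _ _, by rw [Nat.mul_div_cancel_left _ hM]⟩

lemma pred_mod {L j : ℕ} (hj : 0 < j) (hd : j ∣ L) (hL : 0 < L) :
    (L - 1) % j = j - 1 := by
  obtain ⟨c, rfl⟩ := hd
  rcases c with _ | c
  · simp at hL
  · have he : j * (c + 1) - 1 = j * c + (j - 1) := by
      rw [Nat.mul_add, Nat.mul_one]; omega
    rw [he, Nat.mul_add_mod, Nat.mod_eq_of_lt (by omega)]

/-- The reindexing map used to pump each `a`-block of the run. -/
def Fmap (N L : ℕ) (p q : ℕ → ℕ) (k : ℕ) : ℕ :=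
  if k % (N + L) ≤ p (k / (N + L)) then (k / (N + L)) * N + k % (N + L)
  else if k % (N + L) ≤ p (k / (N + L)) + L then
    (k / (N + L)) * N + p (k / (N + L))
      + ((k % (N + L) - p (k / (N + L)) - 1) % (q (k / (N + L)) - p (k / (N + L)))) + 1
  else (k / (N + L)) * N + (k % (N + L) - L)

lemma pump_accept (n : ℕ) (hn : 1 ≤ n) (B : Buchi (Alph 1)) (ρ : ℕ → B.State)
    (hinit : ρ 0 = B.init)
    (hstep : ∀ k, B.step (ρ k) (perword n (n + 1) k) (ρ (k + 1)))
    (hfin : ∀ N : ℕ, ∃ k, N ≤ k ∧ ρ k ∈ B.final)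
    (p q : ℕ → ℕ) (hpq : ∀ t, p t < q t) (hqn : ∀ t, q t ≤ n)
    (heq : ∀ t, ρ (t * (2 * n + 1) + p t) = ρ (t * (2 * n + 1) + q t)) :
    B.Accepts (perword (n + Nat.factorial n) (n + 1)) := by
  set L := Nat.factorial n with hLdef
  have hL0 : 0 < L := Nat.factorial_pos n
  set Nn := 2 * n + 1 with hNn
  have hM0 : 0 < Nn + L := by omega
  -- value lemma for Fmap
  have hFm : ∀ k t r : ℕ, k / (Nn + L) = t → k % (Nn + L) = r →
      Fmap Nn L p q k = if r ≤ p t then t * Nn + r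
        else if r ≤ p t + L then t * Nn + p t + ((r - p t - 1) % (q t - p t)) + 1
        else t * Nn + (r - L) := by
    intro k t r h1 h2
    simp only [Fmap, h1, h2]
  -- letters of the pumped word
  have hwA : ∀ k : ℕ, k % (Nn + L) < n + L →
      perword (n + L) (n + 1) k = ((0 : Fin 1), true) := by
    intro k h
    simp only [perword]
    rw [show n + L + (n + 1) = Nn + L by omega, if_pos h]
  have hwB : ∀ k : ℕ, ¬ k % (Nn + L) < n + L →
      perword (n + L) (n + 1) k = ((0 : Fin 1), false) := by
    intro k h
    simp only [perword]
    rw [show n + L + (n + 1) = Nn + L by omega, if_neg h]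
  -- letters of the original word
  have hwn : ∀ t x : ℕ, x < Nn → perword n (n + 1) (t * Nn + x)
      = if x < n then ((0 : Fin 1), true) else ((0 : Fin 1), false) := by
    intro t x hx
    have hmod : (t * Nn + x) % (n + (n + 1)) = x := by
      rw [show n + (n + 1) = Nn by omega, Nat.mul_comm t Nn, Nat.mul_add_mod,
        Nat.mod_eq_of_lt hx]
    simp only [perword, hmod]
  refine ⟨fun k => ρ (Fmap Nn L p q k), ?_, ?_, ?_⟩
  · -- initial state
    have h0 : Fmap Nn L p q 0 = 0 := by
      rw [hFm 0 0 0 (Nat.zero_div _) (Nat.zero_mod _), if_pos (Nat.zero_le _)]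
      omega
    simp only [h0, hinit]
  · -- steps
    intro k
    set t := k / (Nn + L) with ht
    set r := k % (Nn + L) with hr
    have hrM : r < Nn + L := by rw [hr]; exact Nat.mod_lt _ hM0
    have hptn : p t < n := lt_of_lt_of_le (hpq t) (hqn t)
    have hqtn : q t ≤ n := hqn t
    have hj0 : 0 < q t - p t := by have := hpq t; omega
    have hjL : (q t - p t) ∣ L := Nat.dvd_factorial hj0 (by have := hpq t; omega)
    show B.step (ρ (Fmap Nn L p q k)) (perword (n + L) (n + 1) k) (ρ (Fmap Nn L p q (k + 1)))
    by_cases hA : r ≤ p t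
    · -- case A : in the initial stretch of the block
      have e1 : Fmap Nn L p q k = t * Nn + r := by
        rw [hFm k t r ht.symm hr.symm, if_pos hA]
      obtain ⟨em, ed⟩ := mod_succ₁ (show k % (Nn + L) + 1 < Nn + L by omega)
      have e2 : Fmap Nn L p q (k + 1) = t * Nn + r + 1 := by
        rw [hFm (k + 1) t (r + 1) (by rw [ed, ht]) (by rw [em, hr])]
        by_cases hA2 : r + 1 ≤ p t
        · rw [if_pos hA2]
          omega
        · rw [if_neg hA2, if_pos (by omega), show r + 1 - p t - 1 = 0 by omega,
            Nat.zero_mod]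
          omega
      have H := hstep (t * Nn + r)
      rw [hwn t r (by omega), if_pos (by omega)] at H
      rw [hwA k (by omega), e1, e2]
      exact H
    · by_cases hB : r ≤ p t + L
      · -- case B : in the pumped cycle region
        by_cases hW : (r - p t - 1) % (q t - p t) + 1 = q t - p t
        · -- wrap-around step of the cycle
          have e1 : Fmap Nn L p q k = t * Nn + q t := by
            rw [hFm k t r ht.symm hr.symm, if_neg hA, if_pos hB]
            omega
          obtain ⟨em, ed⟩ := mod_succ₁ (show k % (Nn + L) + 1 < Nn + L by omega)
          have e2 : Fmap Nn L p q (k + 1) = t * Nn + p t + 1 := by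
            rw [hFm (k + 1) t (r + 1) (by rw [ed, ht]) (by rw [em, hr]),
              if_neg (by omega)]
            by_cases hr' : r + 1 ≤ p t + L
            · rw [if_pos hr']
              have hh := (mod_succ₂ hj0 hW).1
              rw [show r + 1 - p t - 1 = (r - p t - 1) + 1 by omega, hh]
            · rw [if_neg hr']
              omega
          have H := hstep (t * Nn + p t)
          rw [hwn t (p t) (by omega), if_pos (by omega)] at H
          rw [heq t] at H
          rw [hwA k (by omega), e1, e2]
          exact H
        · -- ordinary step inside the cycle
          have hsj : (r - p t - 1) % (q t - p t) < q t - p t := Nat.mod_lt _ hj0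
          have hr' : r < p t + L := by
            rcases Nat.lt_or_ge r (p t + L) with h | h
            · exact h
            · exfalso
              have hd1 : r - p t - 1 = L - 1 := by omega
              have := pred_mod hj0 hjL hL0
              rw [hd1, this] at hsj
              apply hW
              rw [hd1, this]
              omega
          set x := p t + (r - p t - 1) % (q t - p t) + 1 with hx
          have hxn : x < n := by
            have := hpq t; omega
          have e1 : Fmap Nn L p q k = t * Nn + x := by
            rw [hFm k t r ht.symm hr.symm, if_neg hA, if_pos hB]
            omega
          obtain ⟨em, ed⟩ := mod_succ₁ (show k % (Nn + L) + 1 < Nn + L by omega)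
          have e2 : Fmap Nn L p q (k + 1) = t * Nn + x + 1 := by
            rw [hFm (k + 1) t (r + 1) (by rw [ed, ht]) (by rw [em, hr]),
              if_neg (by omega), if_pos (by omega)]
            have hh := (mod_succ₁ (show (r - p t - 1) % (q t - p t) + 1 < q t - p t
              by omega)).1
            rw [show r + 1 - p t - 1 = (r - p t - 1) + 1 by omega, hh]
            omega
          have H := hstep (t * Nn + x)
          rw [hwn t x (by omega), if_pos hxn] at H
          rw [hwA k (by omega), e1, e2]
          exact H
      · -- case C : after the pumped region
        have hxN : r - L < Nn := by omega
        have e1 : Fmap Nn L p q k = t * Nn + (r - L) := by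
          rw [hFm k t r ht.symm hr.symm, if_neg hA, if_neg hB]
        by_cases hlast : r + 1 = Nn + L
        · -- last position of the block
          obtain ⟨em, ed⟩ := mod_succ₂ hM0 (show k % (Nn + L) + 1 = Nn + L by omega)
          have e2 : Fmap Nn L p q (k + 1) = t * Nn + (r - L) + 1 := by
            rw [hFm (k + 1) (t + 1) 0 (by rw [ed, ht]) em, if_pos (Nat.zero_le _)]
            have hmul : (t + 1) * Nn = t * Nn + Nn := by ring
            omega
          have H := hstep (t * Nn + (r - L))
          rw [hwn t (r - L) hxN, if_neg (by omega)] at H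
          rw [hwB k (by omega), e1, e2]
          exact H
        · obtain ⟨em, ed⟩ := mod_succ₁ (show k % (Nn + L) + 1 < Nn + L by omega)
          have e2 : Fmap Nn L p q (k + 1) = t * Nn + (r - L) + 1 := by
            rw [hFm (k + 1) t (r + 1) (by rw [ed, ht]) (by rw [em, hr]),
              if_neg (by omega), if_neg (by omega)]
            omega
          have H := hstep (t * Nn + (r - L))
          by_cases hxn : r - L < n
          · rw [hwn t (r - L) hxN, if_pos hxn] at H
            rw [hwA k (by omega), e1, e2]
            exact H
          · rw [hwn t (r - L) hxN, if_neg hxn] at H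
            rw [hwB k (by omega), e1, e2]
            exact H
  · -- final states infinitely often
    intro N0
    obtain ⟨k, hk, hkf⟩ := hfin N0
    have hdm := Nat.div_add_mod k Nn
    set t := k / Nn with ht
    set x := k % Nn with hx
    have hxN : x < Nn := by rw [hx]; exact Nat.mod_lt _ (by omega)
    by_cases hc : x ≤ p t
    · refine ⟨(Nn + L) * t + x, ?_, ?_⟩
      · have hgt : (Nn + L) * t = Nn * t + L * t := by ring
        omega
      · have hdiv : ((Nn + L) * t + x) / (Nn + L) = t := by
          rw [Nat.mul_add_div hM0, Nat.div_eq_of_lt (by omega), Nat.add_zero]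
        have hmod : ((Nn + L) * t + x) % (Nn + L) = x := by
          rw [Nat.mul_add_mod, Nat.mod_eq_of_lt (by omega)]
        have eF : Fmap Nn L p q ((Nn + L) * t + x) = k := by
          rw [hFm _ t x hdiv hmod, if_pos hc]
          have hco : t * Nn = Nn * t := by ring
          omega
        show ρ (Fmap Nn L p q ((Nn + L) * t + x)) ∈ B.final
        rw [eF]
        exact hkf
    · refine ⟨(Nn + L) * t + (x + L), ?_, ?_⟩
      · have hgt : (Nn + L) * t = Nn * t + L * t := by ring
        omega
      · have hdiv : ((Nn + L) * t + (x + L)) / (Nn + L) = t := by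
          rw [Nat.mul_add_div hM0, Nat.div_eq_of_lt (by omega), Nat.add_zero]
        have hmod : ((Nn + L) * t + (x + L)) % (Nn + L) = x + L := by
          rw [Nat.mul_add_mod, Nat.mod_eq_of_lt (by omega)]
        have eF : Fmap Nn L p q ((Nn + L) * t + (x + L)) = k := by
          rw [hFm _ t (x + L) hdiv hmod, if_neg (by omega), if_neg (by omega)]
          have hco : t * Nn = Nn * t := by ring
          omega
        show ρ (Fmap Nn L p q ((Nn + L) * t + (x + L))) ∈ B.final
        rw [eF]
        exact hkf

lemma pre_succ {A : Type*} (w : ℕ → A) (K : ℕ) : pre w (K + 1) = pre w K ++ [w K] := by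
  simp [pre, List.range_succ]

lemma phi_snoc (u : Word 1) (b : Bool) :
    phi (u ++ [((0 : Fin 1), b)]) 0 = phi u 0 + (if b then 1 else -1) := by
  cases b <;> simp [phi, List.count_append] <;> ring

lemma perword_dyck (n m : ℕ) (h : n + 1 ≤ m) : perword m (n + 1) ∈ Dyck 1 := by
  intro K i
  have hi : i = 0 := Subsingleton.elim _ _
  subst hi
  set M := m + (n + 1) with hM
  have hM0 : 0 < M := by omega
  have H : ∀ K : ℕ, (if K % M ≤ m then ((K % M : ℕ) : ℤ) else 2 * m - ((K % M : ℕ) : ℤ))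
      ≤ phi (pre (perword m (n + 1)) K) 0 := by
    intro K
    induction K with
    | zero => simp [pre, phi]
    | succ K ih =>
      have hrM : K % M < M := Nat.mod_lt _ hM0
      rw [pre_succ]
      by_cases hr : K % M < m
      · have hw : perword m (n + 1) K = ((0 : Fin 1), true) := by
          simp [perword, ← hM, hr]
        rw [hw, phi_snoc]
        have h2 : K % M + 1 < M := by omega
        obtain ⟨e1, _⟩ := mod_succ₁ h2
        rw [e1]
        rw [if_pos (le_of_lt hr)] at ih
        rw [if_pos (by omega : K % M + 1 ≤ m)]
        simp only [eq_self_iff_true, if_true]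
        omega
      · have hw : perword m (n + 1) K = ((0 : Fin 1), false) := by
          simp [perword, ← hM, hr]
        rw [hw, phi_snoc]
        by_cases h2 : K % M + 1 < M
        · obtain ⟨e1, _⟩ := mod_succ₁ h2
          rw [e1, if_neg (by omega : ¬ K % M + 1 ≤ m)]
          simp only [Bool.false_eq_true, if_false]
          split at ih <;> omega
        · obtain ⟨e1, _⟩ := mod_succ₂ hM0 (show K % M + 1 = M by omega)
          rw [e1]
          simp only [Bool.false_eq_true, if_false, Nat.zero_le, if_pos, Nat.cast_zero]
          split at ih <;> omega
  have hK := H K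
  have hrM : K % M < M := Nat.mod_lt _ hM0
  split at hK <;> omega

/-- Büchi pumping: if a Büchi automaton with n states accepts (a₁^n ā₁^{n+1})^ω, then it
also accepts (a₁^m ā₁^{n+1})^ω for some m > n; consequently it accepts some word of D₁,
so it cannot remain disjoint from D₁. -/
theorem buchi_pumping (n : ℕ) (B : Buchi (Alph 1))
    (hcard : @Fintype.card B.State B.fin = n)
    (hacc : B.Accepts (perword n (n + 1))) :
    (∃ m : ℕ, n < m ∧ B.Accepts (perword m (n + 1))) ∧
    (∃ w : ℕ → Alph 1, B.Accepts w ∧ w ∈ Dyck 1) := by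
  classical
  obtain ⟨ρ, hinit, hstep, hfin⟩ := hacc
  have hn : 1 ≤ n := by
    rw [← hcard]
    exact (@Fintype.card_pos_iff B.State B.fin).mpr ⟨ρ 0⟩
  have key : ∀ t : ℕ, ∃ pp qq : ℕ, pp < qq ∧ qq ≤ n ∧
      ρ (t * (2 * n + 1) + pp) = ρ (t * (2 * n + 1) + qq) := by
    intro t
    obtain ⟨a, b, hne, hab⟩ := @Fintype.exists_ne_map_eq_of_card_lt (Fin (n + 1)) B.State
      _ B.fin (fun r : Fin (n + 1) => ρ (t * (2 * n + 1) + r))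
      (by rw [hcard, Fintype.card_fin]; omega)
    rcases lt_or_gt_of_ne hne with h | h
    · exact ⟨a, b, by exact_mod_cast h, Nat.lt_succ_iff.mp b.isLt, hab⟩
    · exact ⟨b, a, by exact_mod_cast h, Nat.lt_succ_iff.mp a.isLt, hab.symm⟩
  choose p q hpq hqn heq using key
  have hacc' := pump_accept n hn B ρ hinit hstep hfin p q hpq hqn heq
  have hfac := Nat.factorial_pos n
  exact ⟨⟨n + Nat.factorial n, by omega, hacc'⟩,
    ⟨perword (n + Nat.factorial n) (n + 1), hacc', perword_dyck n _ (by omega)⟩⟩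
end

section
/- Minimal solutions of linear systems have bounded size: Let A ∈ ℤ^{ℓ×m}, b ∈ ℤ^ℓ. If the system A x ≤ b has a solution x ∈ ℕ^m, then it has a solution whose entries are bounded by a value depending only on m, ℓ, and the maximum absolute value of entries of A and b (in particular, at most exponential in the encoding size of the system). Formally: there is a solution x with ‖x‖_∞ ≤ (m·ℓ·(M+1))^{c·(m+ℓ)} for some absolute constant c, where M = max(‖A‖_∞, ‖b‖_∞). -/
open Finset Matrix

namespace SmallSolAux


/-- triangle inequality for natAbs of a sum -/
lemma natAbs_sum_le' {ι : Type*} (s : Finset ι) (f : ι → ℤ) :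
    (∑ i ∈ s, f i).natAbs ≤ ∑ i ∈ s, (f i).natAbs := by
  classical
  induction s using Finset.cons_induction with
  | empty => simp
  | cons a s ha ih =>
    rw [Finset.sum_cons, Finset.sum_cons]
    exact le_trans (Int.natAbs_add_le _ _) (Nat.add_le_add_left ih _)

/-- determinant bound with per-column bounds -/
lemma det_col_bound {ι : Type*} [Fintype ι] [DecidableEq ι]
    (B : Matrix ι ι ℤ) (c : ι → ℕ) (h : ∀ i j, (B i j).natAbs ≤ c j) :
    B.det.natAbs ≤ (Fintype.card ι).factorial * ∏ j, c j := by
  classical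
  rw [Matrix.det_apply']
  refine le_trans (natAbs_sum_le' _ _) ?_
  have hterm : ∀ σ : Equiv.Perm ι, (Equiv.Perm.sign σ • ∏ i, B (σ i) i).natAbs ≤ ∏ j, c j := by
    intro σ
    have h1 : ((Equiv.Perm.sign σ : ℤ) * ∏ i, B (σ i) i).natAbs
        = (∏ i, B (σ i) i).natAbs := by
      rw [Int.natAbs_mul]
      rcases Int.units_eq_one_or (Equiv.Perm.sign σ) with h | h <;> simp [h]
    rw [show (Equiv.Perm.sign σ • ∏ i, B (σ i) i) = (Equiv.Perm.sign σ : ℤ) * ∏ i, B (σ i) i from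
      rfl] -- units smul
    rw [h1, show (∏ i, B (σ i) i).natAbs = ∏ i, (B (σ i) i).natAbs from map_prod Int.natAbsHom _ _]
    exact Finset.prod_le_prod' fun i _ => h (σ i) i
  refine le_trans (Finset.sum_le_sum fun σ _ => hterm σ) ?_
  rw [Finset.sum_const, Finset.card_univ, Fintype.card_perm, smul_eq_mul]


/-- uniform determinant bound -/
lemma det_unif_bound {ι : Type*} [Fintype ι] [DecidableEq ι]
    (B : Matrix ι ι ℤ) (q : ℕ) (h : ∀ i j, (B i j).natAbs ≤ q) :
    B.det.natAbs ≤ (Fintype.card ι).factorial * q ^ (Fintype.card ι) := by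
  have := det_col_bound B (fun _ => q) (fun i j => h i j)
  simpa [Finset.prod_const, Finset.card_univ] using this

/-- adjugate entry bound -/
lemma adjugate_unif_bound {ι : Type*} [Fintype ι] [DecidableEq ι]
    (B : Matrix ι ι ℤ) (q : ℕ) (hq : 1 ≤ q) (h : ∀ i j, (B i j).natAbs ≤ q) :
    ∀ i j, ((Matrix.adjugate B) i j).natAbs ≤ (Fintype.card ι).factorial * q ^ (Fintype.card ι) := by
  intro i j
  rw [Matrix.adjugate_apply]
  refine det_unif_bound _ q ?_
  intro p r
  by_cases hp : p = j
  · subst hp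
    rw [Matrix.updateRow_self]
    by_cases hr : r = i <;> simp [Pi.single_apply, hr, hq]
  · rw [Matrix.updateRow_ne hp]; exact h p r

/-- base-W representation with small digits: zero sum implies all digits zero -/
lemma digits_eq_zero (D : ℕ) : ∀ (n : ℕ) (u : Fin n → ℤ),
    (∀ j, (u j).natAbs ≤ D) → (∑ j, u j * ((2 * D + 2 : ℕ) : ℤ) ^ (j : ℕ)) = 0 →
    ∀ j, u j = 0 := by
  intro n
  induction n with
  | zero => intro u _ _ j; exact absurd j.2 (by omega)
  | succ n ih =>
    intro u hb hs j
    set W : ℤ := ((2 * D + 2 : ℕ) : ℤ) with hW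
    have hsum : u 0 * W ^ (0:ℕ) + ∑ j : Fin n, u j.succ * W ^ (j.succ : ℕ) = 0 := by
      have := Fin.sum_univ_succ (fun j : Fin (n+1) => u j * W ^ (j : ℕ))
      rw [this] at hs
      convert hs using 2 <;> norm_num
    have hfac : ∑ j : Fin n, u j.succ * W ^ (j.succ : ℕ)
        = W * ∑ j : Fin n, u j.succ * W ^ (j : ℕ) := by
      rw [Finset.mul_sum]
      refine Finset.sum_congr rfl fun j _ => ?_
      have : (j.succ : ℕ) = (j : ℕ) + 1 := rfl
      rw [this, pow_succ]; ring
    rw [hfac, pow_zero, mul_one] at hsum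
    have hdvd : (W : ℤ) ∣ u 0 := ⟨-(∑ j : Fin n, u j.succ * W ^ (j : ℕ)), by linarith⟩
    have hu0 : u 0 = 0 := by
      rcases eq_or_ne (u 0) 0 with h | h
      · exact h
      · exfalso
        have h1 : (W : ℤ).natAbs ≤ (u 0).natAbs :=
          Nat.le_of_dvd (Int.natAbs_pos.mpr h) (Int.natAbs_dvd_natAbs.mpr hdvd)
        have h2 : (u 0).natAbs ≤ D := hb 0
        have : (W : ℤ).natAbs = 2 * D + 2 := by rw [hW]; exact Int.natAbs_natCast _
        omega
    rw [hu0, zero_add] at hsum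
    have hWne : (W:ℤ) ≠ 0 := by
      rw [hW]
      have : (2 * D + 2 : ℕ) ≠ 0 := by omega
      exact_mod_cast this
    have hrest : ∑ j : Fin n, u j.succ * W ^ (j : ℕ) = 0 := by
      rcases mul_eq_zero.mp hsum with h | h
      · exact absurd h hWne
      · exact h
    have := ih (fun j => u j.succ) (fun j => hb j.succ) hrest
    rcases Fin.eq_zero_or_eq_succ j with h | ⟨k, hk⟩
    · rw [h]; exact hu0
    · rw [hk]; exact this k

end SmallSolAux
open SmallSolAux

namespace SmallSol

variable {l n : ℕ}

/-- Gram matrix of the columns of `C` indexed by a finset `S`. -/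
def gram (C : Matrix (Fin l) (Fin n) ℤ) (S : Finset (Fin n)) :
    Matrix {x // x ∈ S} {x // x ∈ S} ℤ :=
  Matrix.of fun p q => ∑ i, C i p.1 * C i q.1

/-- The linear combination of the columns of `C` indexed by `S` with coefficients `v`. -/
def colsum (C : Matrix (Fin l) (Fin n) ℤ) (S : Finset (Fin n)) (v : {x // x ∈ S} → ℤ) :
    Fin l → ℤ :=
  fun i => ∑ q : {x // x ∈ S}, C i q.1 * v q

/-- Extension by zero of a vector indexed by `S`. -/
def ext (S : Finset (Fin n)) (v : {x // x ∈ S} → ℤ) : Fin n → ℤ :=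
  fun j => if h : j ∈ S then v ⟨j, h⟩ else 0

lemma mulVec_coord (C : Matrix (Fin l) (Fin n) ℤ) (w : Fin n → ℤ) (i : Fin l) :
    (C *ᵥ w) i = ∑ j, C i j * w j := rfl

lemma gram_mulVec (C : Matrix (Fin l) (Fin n) ℤ) (S : Finset (Fin n))
    (v : {x // x ∈ S} → ℤ) (p : {x // x ∈ S}) :
    (gram C S *ᵥ v) p = ∑ i, C i p.1 * colsum C S v i := by
  show ∑ q : {x // x ∈ S}, (∑ i, C i p.1 * C i q.1) * v q = _
  calc ∑ q : {x // x ∈ S}, (∑ i, C i p.1 * C i q.1) * v q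
      = ∑ q : {x // x ∈ S}, ∑ i, C i p.1 * (C i q.1 * v q) := by
        refine Finset.sum_congr rfl fun q _ => ?_
        rw [Finset.sum_mul]
        exact Finset.sum_congr rfl fun i _ => by ring
    _ = ∑ i, ∑ q : {x // x ∈ S}, C i p.1 * (C i q.1 * v q) := Finset.sum_comm
    _ = ∑ i, C i p.1 * colsum C S v i := by
        refine Finset.sum_congr rfl fun i _ => ?_
        rw [colsum, Finset.mul_sum]

lemma gram_kernel (C : Matrix (Fin l) (Fin n) ℤ) (S : Finset (Fin n))
    (v : {x // x ∈ S} → ℤ) (h : gram C S *ᵥ v = 0) :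
    colsum C S v = 0 := by
  have key : ∑ i, colsum C S v i * colsum C S v i = 0 := by
    calc ∑ i, colsum C S v i * colsum C S v i
        = ∑ i, (∑ q : {x // x ∈ S}, C i q.1 * v q) * colsum C S v i := rfl
      _ = ∑ i, ∑ q : {x // x ∈ S}, v q * (C i q.1 * colsum C S v i) := by
          refine Finset.sum_congr rfl fun i _ => ?_
          rw [Finset.sum_mul]
          exact Finset.sum_congr rfl fun q _ => by ring
      _ = ∑ q : {x // x ∈ S}, v q * ∑ i, C i q.1 * colsum C S v i := by
          rw [Finset.sum_comm]
          exact Finset.sum_congr rfl fun q _ => by rw [Finset.mul_sum]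
      _ = ∑ q : {x // x ∈ S}, v q * ((gram C S *ᵥ v) q) := by
          exact Finset.sum_congr rfl fun q _ => by rw [gram_mulVec]
      _ = 0 := by rw [h]; simp
  funext i
  exact (Finset.sum_mul_self_eq_zero_iff _ _).mp key i (Finset.mem_univ i)

lemma ext_mulVec (C : Matrix (Fin l) (Fin n) ℤ) (S : Finset (Fin n))
    (v : {x // x ∈ S} → ℤ) :
    C *ᵥ ext S v = colsum C S v := by
  funext i
  rw [mulVec_coord, colsum]
  rw [show (∑ q : {x // x ∈ S}, C i q.1 * v q) = ∑ j ∈ S, C i j * ext S v j from ?_]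
  · symm
    apply Finset.sum_subset (Finset.subset_univ S)
    intro j _ hj
    rw [ext, dif_neg hj, mul_zero]
  · rw [← Finset.sum_coe_sort S (fun j => C i j * ext S v j)]
    refine Finset.sum_congr rfl fun q _ => ?_
    rw [ext, dif_pos q.2]

lemma gram_entry_bound (C : Matrix (Fin l) (Fin n) ℤ) (S : Finset (Fin n)) (N : ℕ)
    (hC : ∀ i j, (C i j).natAbs ≤ N) (p q : {x // x ∈ S}) :
    ((gram C S) p q).natAbs ≤ l * N * N := by
  have : (gram C S) p q = ∑ i, C i p.1 * C i q.1 := rfl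
  rw [this]
  refine le_trans (natAbs_sum_le' _ _) ?_
  calc ∑ i, (C i p.1 * C i q.1).natAbs ≤ ∑ _i : Fin l, N * N := by
        refine Finset.sum_le_sum fun i _ => ?_
        rw [Int.natAbs_mul]
        exact Nat.mul_le_mul (hC i p.1) (hC i q.1)
    _ = l * N * N := by rw [Finset.sum_const, Finset.card_univ, Fintype.card_fin,
          smul_eq_mul, Nat.mul_assoc]


/-- the key bound: `(n+1) * (n! * q^n) * q` where `q = l*N*N+1`. -/
def Dbound (l n N : ℕ) : ℕ :=
  (n + 1) * (n.factorial * (l * N * N + 1) ^ n) * (l * N * N + 1)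

lemma kernel_small {l n : ℕ} (C : Matrix (Fin l) (Fin n) ℤ) (N : ℕ)
    (hC : ∀ i j, (C i j).natAbs ≤ N) :
    ∀ (k : ℕ) (S : Finset (Fin n)), S.card ≤ k →
    (∃ w : Fin n → ℤ, w ≠ 0 ∧ (∀ j ∉ S, w j = 0) ∧ C *ᵥ w = 0) →
    ∃ u : Fin n → ℤ, u ≠ 0 ∧ (∀ j ∉ S, u j = 0) ∧ C *ᵥ u = 0 ∧
      ∀ j, (u j).natAbs ≤ Dbound l n N := by
  intro k
  induction k with
  | zero =>
    intro S hcard ⟨w, hw0, hsupp, _⟩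
    exfalso
    apply hw0
    funext j
    refine hsupp j ?_
    have : S = ∅ := Finset.card_eq_zero.mp (Nat.le_zero.mp hcard)
    simp [this]
  | succ k ih =>
    intro S hcard ⟨w, hw0, hsupp, hker⟩
    obtain ⟨j₀, hj₀ne⟩ := Function.ne_iff.mp hw0
    have hj₀S : j₀ ∈ S := by
      by_contra h
      exact hj₀ne (hsupp j₀ h)
    set q : ℕ := l * N * N + 1 with hq
    have hq1 : 1 ≤ q := Nat.le_add_left 1 _
    set Δ : ℕ := n.factorial * q ^ n with hΔ
    by_cases hrec : ∃ w' : Fin n → ℤ, w' ≠ 0 ∧ (∀ j ∉ S.erase j₀, w' j = 0) ∧ C *ᵥ w' = 0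
    · obtain ⟨u, hu0, husupp, huker, hubd⟩ := ih (S.erase j₀) (by
        have := Finset.card_erase_of_mem hj₀S
        omega) hrec
      exact ⟨u, hu0, fun j hj => husupp j (fun hmem => hj (Finset.mem_of_mem_erase hmem)),
        huker, hubd⟩
    · set T : Finset (Fin n) := S.erase j₀ with hT
      have hj₀T : j₀ ∉ T := Finset.notMem_erase j₀ S
      have hcardT : Fintype.card {x // x ∈ T} ≤ n := by
        rw [Fintype.card_coe]
        exact le_trans (Finset.card_le_univ T) (by simp)
      set G := gram C T with hG
      have hGbd : ∀ p p' : {x // x ∈ T}, (G p p').natAbs ≤ q :=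
        fun p p' => le_trans (gram_entry_bound C T N hC p p') (Nat.le_succ _)
      -- the determinant of the Gram matrix of T is nonzero
      have hdet : G.det ≠ 0 := by
        intro h0
        obtain ⟨v, hv0, hvker⟩ := Matrix.exists_mulVec_eq_zero_iff.mpr h0
        apply hrec
        refine ⟨ext T v, ?_, ?_, ?_⟩
        · obtain ⟨p, hp⟩ := Function.ne_iff.mp hv0
          intro hcontra
          apply hp
          have := congrFun hcontra p.1
          rwa [ext, dif_pos p.2, Subtype.eta] at this
        · intro j hj
          rw [ext, dif_neg hj]
        · rw [ext_mulVec]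
          exact gram_kernel C T v hvker
      have hdetbd : G.det.natAbs ≤ Δ := by
        refine le_trans (det_unif_bound G q hGbd) ?_
        exact Nat.mul_le_mul (Nat.factorial_le hcardT) (Nat.pow_le_pow_right hq1 hcardT)
      have hadjbd : ∀ p p', ((Matrix.adjugate G) p p').natAbs ≤ Δ := by
        intro p p'
        refine le_trans (adjugate_unif_bound G q hq1 hGbd p p') ?_
        exact Nat.mul_le_mul (Nat.factorial_le hcardT) (Nat.pow_le_pow_right hq1 hcardT)
      set dv : {x // x ∈ T} → ℤ := fun p => ∑ i, C i p.1 * C i j₀ with hdv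
      have hdvbd : ∀ p, (dv p).natAbs ≤ q := by
        intro p
        rw [hdv]
        refine le_trans (natAbs_sum_le' _ _) (le_trans ?_ (Nat.le_succ (l * N * N)))
        calc ∑ i, (C i p.1 * C i j₀).natAbs ≤ ∑ _i : Fin l, N * N := by
              refine Finset.sum_le_sum fun i _ => ?_
              rw [Int.natAbs_mul]
              exact Nat.mul_le_mul (hC i p.1) (hC i j₀)
          _ = l * N * N := by rw [Finset.sum_const, Finset.card_univ, Fintype.card_fin,
                smul_eq_mul, Nat.mul_assoc]
      set zz : {x // x ∈ T} → ℤ := (Matrix.adjugate G) *ᵥ dv with hzz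
      have hzzbd : ∀ p, (zz p).natAbs ≤ n * (Δ * q) := by
        intro p
        rw [hzz]
        have : ((Matrix.adjugate G) *ᵥ dv) p = ∑ p', (Matrix.adjugate G) p p' * dv p' := rfl
        rw [this]
        refine le_trans (natAbs_sum_le' _ _) ?_
        calc ∑ p', ((Matrix.adjugate G) p p' * dv p').natAbs
            ≤ ∑ _p' : {x // x ∈ T}, Δ * q := by
              refine Finset.sum_le_sum fun p' _ => ?_
              rw [Int.natAbs_mul]
              exact Nat.mul_le_mul (hadjbd p p') (hdvbd p')
          _ = Fintype.card {x // x ∈ T} * (Δ * q) := by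
              rw [Finset.sum_const, Finset.card_univ, smul_eq_mul]
          _ ≤ n * (Δ * q) := Nat.mul_le_mul_right _ hcardT
      have hGz : G *ᵥ zz = G.det • dv := by
        rw [hzz, Matrix.mulVec_mulVec, Matrix.mul_adjugate, Matrix.smul_mulVec,
          Matrix.one_mulVec]
      -- the candidate vector u
      set u : Fin n → ℤ := fun j => if h : j ∈ T then -zz ⟨j, h⟩ else if j = j₀ then G.det else 0
        with hu
      have hu_j₀ : u j₀ = G.det := by rw [hu]; simp [hj₀T]
      have hu_T : ∀ (j) (h : j ∈ T), u j = -zz ⟨j, h⟩ := by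
        intro j h; rw [hu]; simp [h]
      have hu_out : ∀ j, j ∉ T → j ≠ j₀ → u j = 0 := by
        intro j h1 h2; rw [hu]; simp [h1, h2]
      set y : Fin l → ℤ := C *ᵥ u with hy
      have hyi : ∀ i, y i = C i j₀ * G.det - ∑ p : {x // x ∈ T}, C i p.1 * zz p := by
        intro i
        rw [hy, mulVec_coord]
        rw [show (∑ j, C i j * u j) = ∑ j ∈ insert j₀ T, C i j * u j from ?_]
        · rw [Finset.sum_insert hj₀T, hu_j₀]
          congr 1
          rw [← Finset.sum_coe_sort T (fun j => C i j * u j)]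
          rw [← Finset.sum_neg_distrib]
          refine Finset.sum_congr rfl fun p _ => ?_
          rw [hu_T p.1 p.2, Subtype.eta]
          ring
        · symm
          apply Finset.sum_subset (Finset.subset_univ _)
          intro j _ hj
          rw [Finset.mem_insert] at hj
          push_neg at hj
          rw [hu_out j hj.2 hj.1, mul_zero]
      -- (a): orthogonality of y to columns in T
      have ha : ∀ p : {x // x ∈ T}, ∑ i, C i p.1 * y i = 0 := by
        intro p
        have expand : ∑ i, C i p.1 * y i
            = G.det * dv p - (G *ᵥ zz) p := by
          rw [gram_mulVec C T zz p]
          rw [show colsum C T zz = fun i => ∑ q : {x // x ∈ T}, C i q.1 * zz q from rfl]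
          rw [hdv]
          rw [Finset.mul_sum, ← Finset.sum_sub_distrib]
          refine Finset.sum_congr rfl fun i _ => ?_
          rw [hyi i]
          ring
        rw [expand, hGz]
        simp
      -- (b): orthogonality of y to column j₀
      have hb : ∑ i, C i j₀ * y i = 0 := by
        have hS_eq : insert j₀ T = S := Finset.insert_erase hj₀S
        have hcol : ∀ i, C i j₀ * w j₀ = -∑ p : {x // x ∈ T}, C i p.1 * w p.1 := by
          intro i
          have h0 : ∑ j, C i j * w j = 0 := congrFun hker i
          have h1 : ∑ j ∈ insert j₀ T, C i j * w j = 0 := by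
            rw [← h0]
            apply Finset.sum_subset (Finset.subset_univ _)
            intro j _ hj
            rw [hsupp j (by rw [← hS_eq]; exact hj), mul_zero]
          rw [Finset.sum_insert hj₀T] at h1
          rw [← Finset.sum_coe_sort T (fun j => C i j * w j)] at h1
          linarith
        have key : w j₀ * (∑ i, C i j₀ * y i) = 0 := by
          have e1 : ∀ i, (C i j₀ * w j₀) * y i
              = -∑ p : {x // x ∈ T}, w p.1 * (C i p.1 * y i) := by
            intro i
            rw [hcol i, neg_mul, Finset.sum_mul]
            congr 1
            exact Finset.sum_congr rfl fun p _ => by ring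
          calc w j₀ * (∑ i, C i j₀ * y i) = ∑ i, (C i j₀ * w j₀) * y i := by
                rw [Finset.mul_sum]
                exact Finset.sum_congr rfl fun i _ => by ring
            _ = ∑ i, -∑ p : {x // x ∈ T}, w p.1 * (C i p.1 * y i) :=
                Finset.sum_congr rfl fun i _ => e1 i
            _ = -∑ i, ∑ p : {x // x ∈ T}, w p.1 * (C i p.1 * y i) := by
                rw [Finset.sum_neg_distrib]
            _ = -∑ p : {x // x ∈ T}, ∑ i, w p.1 * (C i p.1 * y i) := by rw [Finset.sum_comm]
            _ = 0 := by
                rw [neg_eq_zero]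
                refine Finset.sum_eq_zero fun p _ => ?_
                rw [← Finset.mul_sum, ha p, mul_zero]
        rcases mul_eq_zero.mp key with h | h
        · exact absurd h hj₀ne
        · exact h
      -- y = 0
      have hy0 : y = 0 := by
        have key : ∑ i, y i * y i = 0 := by
          calc ∑ i, y i * y i = ∑ i, (∑ j, C i j * u j) * y i := by
                refine Finset.sum_congr rfl fun i _ => ?_
                rw [show y i = (C *ᵥ u) i from rfl, mulVec_coord]
            _ = ∑ i, ∑ j, u j * (C i j * y i) := by
                refine Finset.sum_congr rfl fun i _ => ?_
                rw [Finset.sum_mul]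
                exact Finset.sum_congr rfl fun j _ => by ring
            _ = ∑ j, ∑ i, u j * (C i j * y i) := Finset.sum_comm
            _ = ∑ j, u j * ∑ i, C i j * y i := by
                refine Finset.sum_congr rfl fun j _ => ?_
                rw [Finset.mul_sum]
            _ = ∑ j ∈ insert j₀ T, u j * ∑ i, C i j * y i := by
                symm
                apply Finset.sum_subset (Finset.subset_univ _)
                intro j _ hj
                rw [Finset.mem_insert] at hj
                push_neg at hj
                rw [hu_out j hj.2 hj.1, zero_mul]
            _ = 0 := by
                rw [Finset.sum_insert hj₀T, hb, mul_zero, zero_add]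
                rw [← Finset.sum_coe_sort T (fun j => u j * ∑ i, C i j * y i)]
                refine Finset.sum_eq_zero fun p _ => ?_
                rw [hu_T p.1 p.2, Subtype.eta, ha p, mul_zero]
        funext i
        exact (Finset.sum_mul_self_eq_zero_iff _ _).mp key i (Finset.mem_univ i)
      -- assemble
      have hDb : Dbound l n N = (n + 1) * Δ * q := rfl
      refine ⟨u, ?_, ?_, ?_, ?_⟩
      · intro h0
        apply hdet
        rw [← hu_j₀, h0]
        rfl
      · intro j hj
        have h1 : j ∉ T := fun h => hj (Finset.mem_of_mem_erase h)
        have h2 : j ≠ j₀ := fun h => hj (h ▸ hj₀S)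
        exact hu_out j h1 h2
      · rw [← hy]; exact hy0
      · intro j
        rw [hDb]
        by_cases h1 : j ∈ T
        · rw [hu_T j h1, Int.natAbs_neg]
          refine le_trans (hzzbd ⟨j, h1⟩) ?_
          calc n * (Δ * q) ≤ (n + 1) * (Δ * q) :=
                Nat.mul_le_mul_right _ (Nat.le_succ n)
            _ = (n + 1) * Δ * q := by ring
        · by_cases h2 : j = j₀
          · rw [h2, hu_j₀]
            refine le_trans hdetbd ?_
            calc Δ = 1 * Δ * 1 := by ring
              _ ≤ (n + 1) * Δ * q := by
                  exact Nat.mul_le_mul (Nat.mul_le_mul_right _ (by omega)) hq1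
          · rw [hu_out j h1 h2]
            simp

/-- final bound for the equational system -/
def Fbound (l n N : ℕ) : ℕ :=
  n * (n.factorial * (l * N * N + 1) ^ n) *
    ((l * N * N + 1) * (n * Dbound l n N + 1)) + Dbound l n N

lemma main_eq {l n : ℕ} (C : Matrix (Fin l) (Fin n) ℤ) (b : Fin l → ℤ) (N : ℕ)
    (hC : ∀ i j, (C i j).natAbs ≤ N) (hb : ∀ i, (b i).natAbs ≤ N)
    (hsol : ∃ z : Fin n → ℕ, ∀ i, (∑ j, C i j * (z j : ℤ)) = b i) :
    ∃ z : Fin n → ℕ, (∀ i, (∑ j, C i j * (z j : ℤ)) = b i) ∧ ∀ j, z j ≤ Fbound l n N := by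
  classical
  set q : ℕ := l * N * N + 1 with hq
  have hq1 : 1 ≤ q := Nat.le_add_left 1 _
  set Δ : ℕ := n.factorial * q ^ n with hΔ
  set D : ℕ := Dbound l n N with hD
  set W : ℕ := 2 * D + 2 with hW
  set sol : (Fin n → ℕ) → Prop := fun z => ∀ i, (∑ j, C i j * (z j : ℤ)) = b i with hsoldef
  set μ : (Fin n → ℕ) → ℕ := fun z => ∑ j, z j * W ^ (j : ℕ) with hμ
  set Sset : Set ℕ := {t | ∃ z, sol z ∧ μ z = t} with hSset
  have hne : Sset.Nonempty := by
    obtain ⟨z, hz⟩ := hsol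
    exact ⟨μ z, z, hz, rfl⟩
  obtain ⟨z₀, hz₀sol, hz₀μ⟩ := Nat.sInf_mem hne
  have hmin : ∀ z, sol z → sInf Sset ≤ μ z := fun z hz => Nat.sInf_le ⟨z, hz, rfl⟩
  set L : Finset (Fin n) := Finset.univ.filter (fun j => D + 1 ≤ z₀ j) with hL
  have hsmall : ∀ j, j ∉ L → z₀ j ≤ D := by
    intro j hj
    by_contra h
    exact hj (Finset.mem_filter.mpr ⟨Finset.mem_univ j, by omega⟩)
  have hbig : ∀ j, j ∈ L → D + 1 ≤ z₀ j := fun j hj => (Finset.mem_filter.mp hj).2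
  -- no nonzero integer kernel vector supported on L
  have hnoker : ¬∃ w : Fin n → ℤ, w ≠ 0 ∧ (∀ j ∉ L, w j = 0) ∧ C *ᵥ w = 0 := by
    intro hker
    obtain ⟨u, hu0, husupp, huker, hubd⟩ := kernel_small C N hC L.card L le_rfl hker
    have hδ : (∑ j, u j * ((W : ℕ) : ℤ) ^ (j : ℕ)) ≠ 0 := by
      intro h0
      apply hu0
      funext j
      exact digits_eq_zero D n u hubd h0 j
    obtain ⟨v, hv_ker, hv_supp, hv_bd, hvδ⟩ :
        ∃ v : Fin n → ℤ, C *ᵥ v = 0 ∧ (∀ j ∉ L, v j = 0) ∧ (∀ j, (v j).natAbs ≤ D) ∧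
          (∑ j, v j * ((W : ℕ) : ℤ) ^ (j : ℕ)) < 0 := by
      rcases lt_or_gt_of_ne hδ with h | h
      · exact ⟨u, huker, husupp, hubd, h⟩
      · refine ⟨-u, by rw [Matrix.mulVec_neg, huker, neg_zero],
          fun j hj => by rw [Pi.neg_apply, husupp j hj, neg_zero],
          fun j => by rw [Pi.neg_apply, Int.natAbs_neg]; exact hubd j, ?_⟩
        have : ∑ j, (-u) j * ((W : ℕ) : ℤ) ^ (j : ℕ)
            = -∑ j, u j * ((W : ℕ) : ℤ) ^ (j : ℕ) := by
          rw [← Finset.sum_neg_distrib]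
          exact Finset.sum_congr rfl fun j _ => by rw [Pi.neg_apply]; ring
        rw [this]
        omega
    set z' : Fin n → ℕ := fun j => ((z₀ j : ℤ) + v j).toNat with hz'
    have hz'cast : ∀ j, ((z' j : ℕ) : ℤ) = (z₀ j : ℤ) + v j := by
      intro j
      rw [hz']
      rw [Int.toNat_of_nonneg]
      by_cases hj : j ∈ L
      · have h1 : D + 1 ≤ z₀ j := hbig j hj
        have h2 : |v j| ≤ (D : ℤ) := by
          rw [Int.abs_eq_natAbs]
          exact_mod_cast hv_bd j
        have h3 : ((D : ℕ) : ℤ) + 1 ≤ (z₀ j : ℤ) := by exact_mod_cast h1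
        have := abs_le.mp h2
        linarith
      · rw [hv_supp j hj, add_zero]
        positivity
    have hz'sol : sol z' := by
      intro i
      have : (∑ j, C i j * ((z' j : ℕ) : ℤ)) = ∑ j, C i j * ((z₀ j : ℤ) + v j) :=
        Finset.sum_congr rfl fun j _ => by rw [hz'cast j]
      rw [this]
      have expand : ∑ j, C i j * ((z₀ j : ℤ) + v j)
          = (∑ j, C i j * (z₀ j : ℤ)) + ∑ j, C i j * v j := by
        rw [← Finset.sum_add_distrib]
        exact Finset.sum_congr rfl fun j _ => by ring
      rw [expand, hz₀sol i]
      have : (∑ j, C i j * v j) = (C *ᵥ v) i := rfl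
      rw [this, hv_ker]
      simp
    have hμlt : μ z' < μ z₀ := by
      have hcast : ((μ z' : ℕ) : ℤ)
          = ((μ z₀ : ℕ) : ℤ) + ∑ j, v j * ((W : ℕ) : ℤ) ^ (j : ℕ) := by
        rw [hμ]
        push_cast
        rw [← Finset.sum_add_distrib]
        refine Finset.sum_congr rfl fun j _ => ?_
        rw [hz'cast j]
        ring
      have : ((μ z' : ℕ) : ℤ) < ((μ z₀ : ℕ) : ℤ) := by rw [hcast]; omega
      exact_mod_cast this
    have := hmin z' hz'sol
    omega
  -- Gram matrix of the large coordinates is nonsingular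
  set G := gram C L with hG
  have hGbd : ∀ p p' : {x // x ∈ L}, (G p p').natAbs ≤ q :=
    fun p p' => le_trans (gram_entry_bound C L N hC p p') (Nat.le_succ _)
  have hcardL : Fintype.card {x // x ∈ L} ≤ n := by
    rw [Fintype.card_coe]
    exact le_trans (Finset.card_le_univ L) (by simp)
  have hdet : G.det ≠ 0 := by
    intro h0
    obtain ⟨v, hv0, hvker⟩ := Matrix.exists_mulVec_eq_zero_iff.mpr h0
    apply hnoker
    refine ⟨ext L v, ?_, ?_, ?_⟩
    · obtain ⟨p, hp⟩ := Function.ne_iff.mp hv0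
      intro hcontra
      apply hp
      have := congrFun hcontra p.1
      rwa [ext, dif_pos p.2, Subtype.eta] at this
    · intro j hj
      rw [ext, dif_neg hj]
    · rw [ext_mulVec]
      exact gram_kernel C L v hvker
  have hdetbd : 1 ≤ G.det.natAbs := Int.natAbs_pos.mpr hdet
  have hΔdet : G.det.natAbs ≤ Δ := by
    refine le_trans (det_unif_bound G q hGbd) ?_
    exact Nat.mul_le_mul (Nat.factorial_le hcardL) (Nat.pow_le_pow_right hq1 hcardL)
  have hadjbd : ∀ p p', ((Matrix.adjugate G) p p').natAbs ≤ Δ := by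
    intro p p'
    refine le_trans (adjugate_unif_bound G q hq1 hGbd p p') ?_
    exact Nat.mul_le_mul (Nat.factorial_le hcardL) (Nat.pow_le_pow_right hq1 hcardL)
  set zL : {x // x ∈ L} → ℤ := fun p => (z₀ p.1 : ℤ) with hzL
  set dL : {x // x ∈ L} → ℤ :=
    fun p => ∑ i, C i p.1 * (b i - ∑ j ∈ Lᶜ, C i j * (z₀ j : ℤ)) with hdL
  have hGzL : G *ᵥ zL = dL := by
    funext p
    rw [hG, gram_mulVec C L zL p, hdL]
    refine Finset.sum_congr rfl fun i _ => ?_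
    congr 1
    have hsplit : (∑ j ∈ L, C i j * (z₀ j : ℤ)) + ∑ j ∈ Lᶜ, C i j * (z₀ j : ℤ)
        = ∑ j, C i j * (z₀ j : ℤ) := Finset.sum_add_sum_compl L _
    have hcs : colsum C L zL i = ∑ j ∈ L, C i j * (z₀ j : ℤ) := by
      rw [colsum, ← Finset.sum_coe_sort L (fun j => C i j * (z₀ j : ℤ))]
    rw [hcs]
    rw [hz₀sol i] at hsplit
    linarith
  have hdLbd : ∀ p, (dL p).natAbs ≤ q * (n * D + 1) := by
    intro p
    rw [hdL]
    refine le_trans (natAbs_sum_le' _ _) ?_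
    have hinner : ∀ i, (b i - ∑ j ∈ Lᶜ, C i j * (z₀ j : ℤ)).natAbs ≤ N * (n * D + 1) := by
      intro i
      refine le_trans (Int.natAbs_sub_le _ _) ?_
      have h2 : (∑ j ∈ Lᶜ, C i j * (z₀ j : ℤ)).natAbs ≤ n * (N * D) := by
        refine le_trans (natAbs_sum_le' _ _) ?_
        calc ∑ j ∈ Lᶜ, (C i j * (z₀ j : ℤ)).natAbs ≤ ∑ _j ∈ Lᶜ, N * D := by
              refine Finset.sum_le_sum fun j hj => ?_
              rw [Int.natAbs_mul]
              refine Nat.mul_le_mul (hC i j) ?_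
              rw [Int.natAbs_natCast]
              exact hsmall j (by simpa using hj)
          _ = Lᶜ.card * (N * D) := by rw [Finset.sum_const, smul_eq_mul]
          _ ≤ n * (N * D) := by
              refine Nat.mul_le_mul_right _ ?_
              exact le_trans (Finset.card_le_univ _) (by simp)
      calc (b i).natAbs + (∑ j ∈ Lᶜ, C i j * (z₀ j : ℤ)).natAbs
          ≤ N + n * (N * D) := Nat.add_le_add (hb i) h2
        _ ≤ N * (n * D + 1) := by ring_nf; omega
    calc ∑ i, (C i p.1 * (b i - ∑ j ∈ Lᶜ, C i j * (z₀ j : ℤ))).natAbs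
        ≤ ∑ _i : Fin l, N * (N * (n * D + 1)) := by
          refine Finset.sum_le_sum fun i _ => ?_
          rw [Int.natAbs_mul]
          exact Nat.mul_le_mul (hC i p.1) (hinner i)
      _ = l * (N * (N * (n * D + 1))) := by
          rw [Finset.sum_const, Finset.card_univ, Fintype.card_fin, smul_eq_mul]
      _ ≤ q * (n * D + 1) := by
          rw [hq]
          ring_nf
          nlinarith
  -- Cramer bound on the large coordinates
  have hlarge : ∀ p : {x // x ∈ L}, z₀ p.1 ≤ n * Δ * (q * (n * D + 1)) := by
    intro p
    have hdet_smul : G.det • zL = (Matrix.adjugate G) *ᵥ dL := by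
      rw [← hGzL, Matrix.mulVec_mulVec, Matrix.adjugate_mul, Matrix.smul_mulVec,
        Matrix.one_mulVec]
    have hcoord : G.det * zL p = ((Matrix.adjugate G) *ᵥ dL) p := congrFun hdet_smul p
    have hrhs : (((Matrix.adjugate G) *ᵥ dL) p).natAbs ≤ n * Δ * (q * (n * D + 1)) := by
      have : ((Matrix.adjugate G) *ᵥ dL) p = ∑ p', (Matrix.adjugate G) p p' * dL p' := rfl
      rw [this]
      refine le_trans (natAbs_sum_le' _ _) ?_
      calc ∑ p', ((Matrix.adjugate G) p p' * dL p').natAbs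
          ≤ ∑ _p' : {x // x ∈ L}, Δ * (q * (n * D + 1)) := by
            refine Finset.sum_le_sum fun p' _ => ?_
            rw [Int.natAbs_mul]
            exact Nat.mul_le_mul (hadjbd p p') (hdLbd p')
        _ = Fintype.card {x // x ∈ L} * (Δ * (q * (n * D + 1))) := by
            rw [Finset.sum_const, Finset.card_univ, smul_eq_mul]
        _ ≤ n * (Δ * (q * (n * D + 1))) := Nat.mul_le_mul_right _ hcardL
        _ = n * Δ * (q * (n * D + 1)) := by ring
    have hnat : G.det.natAbs * z₀ p.1 ≤ n * Δ * (q * (n * D + 1)) := by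
      have : (G.det * zL p).natAbs = G.det.natAbs * z₀ p.1 := by
        rw [Int.natAbs_mul, hzL, Int.natAbs_natCast]
      rw [← this, hcoord]
      exact hrhs
    calc z₀ p.1 = 1 * z₀ p.1 := (one_mul _).symm
      _ ≤ G.det.natAbs * z₀ p.1 := Nat.mul_le_mul_right _ hdetbd
      _ ≤ n * Δ * (q * (n * D + 1)) := hnat
  refine ⟨z₀, hz₀sol, ?_⟩
  intro j
  rw [show Fbound l n N = n * Δ * (q * (n * D + 1)) + D from rfl]
  by_cases hj : j ∈ L
  · exact le_trans (hlarge ⟨j, hj⟩) (Nat.le_add_right _ _)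
  · exact le_trans (hsmall j hj) (Nat.le_add_left _ _)

lemma Fbound_le (m l M : ℕ) (hm : 1 ≤ m) (hl : 1 ≤ l) (hM : 1 ≤ M) :
    Fbound l (m + l) (M + 1) ≤ (m * l * (M + 1)) ^ (100 * (m + l)) := by
  set B : ℕ := m * l * (M + 1) with hB
  set n : ℕ := m + l with hn
  set N : ℕ := M + 1 with hN
  have hn1 : 1 ≤ n := by omega
  have hB2 : 2 ≤ B := by
    have : 1 * 1 * 2 ≤ m * l * N := Nat.mul_le_mul (Nat.mul_le_mul hm hl) (by omega)
    simpa using this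
  have hB1 : 1 ≤ B := by omega
  have hlB : l ≤ B := by
    have : 1 * l * 1 ≤ m * l * N := Nat.mul_le_mul (Nat.mul_le_mul hm le_rfl) (by omega)
    simpa using this
  have hNB : N ≤ B := by
    have h := Nat.mul_le_mul (Nat.mul_le_mul hm hl) (le_refl N)
    rw [one_mul, one_mul] at h
    exact h
  have hmlB : m * l ≤ B := by
    have : m * l * 1 ≤ m * l * N := Nat.mul_le_mul le_rfl (by omega)
    simpa using this
  have hnB : n ≤ B ^ 2 := by
    have hm' : m ≤ m * l := Nat.le_mul_of_pos_right m (by omega)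
    have hl' : l ≤ m * l := Nat.le_mul_of_pos_left l (by omega)
    have h1 : n ≤ 2 * (m * l) := by omega
    have h2 : 2 * (m * l) ≤ B * B := Nat.mul_le_mul hB2 hmlB
    calc n ≤ 2 * (m * l) := h1
      _ ≤ B * B := h2
      _ = B ^ 2 := by ring
  set q : ℕ := l * N * N + 1 with hq
  have hqB : q ≤ B ^ 4 := by
    have h1 : l * N * N ≤ B * B * B := by
      exact Nat.mul_le_mul (Nat.mul_le_mul hlB hNB) hNB
    have h2 : B * B * B + 1 ≤ B * B * B * B := by
      have hp : 1 ≤ B * B * B := Nat.one_le_iff_ne_zero.mpr (by positivity)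
      have := Nat.mul_le_mul_left (B * B * B) hB2
      omega
    calc q ≤ B * B * B + 1 := by omega
      _ ≤ B * B * B * B := h2
      _ = B ^ 4 := by ring
  set Δ : ℕ := n.factorial * q ^ n with hΔ
  have hΔB : Δ ≤ B ^ (6 * n) := by
    have h1 : n.factorial ≤ B ^ (2 * n) := by
      calc n.factorial ≤ n ^ n := Nat.factorial_le_pow n
        _ ≤ (B ^ 2) ^ n := Nat.pow_le_pow_left hnB n
        _ = B ^ (2 * n) := by rw [← pow_mul]
    have h2 : q ^ n ≤ B ^ (4 * n) := by
      calc q ^ n ≤ (B ^ 4) ^ n := Nat.pow_le_pow_left hqB n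
        _ = B ^ (4 * n) := by rw [← pow_mul]
    calc Δ ≤ B ^ (2 * n) * B ^ (4 * n) := Nat.mul_le_mul h1 h2
      _ = B ^ (6 * n) := by rw [← pow_add]; ring_nf
  have hDB : Dbound l n N ≤ B ^ (6 * n + 7) := by
    have hDeq : Dbound l n N = (n + 1) * Δ * q := rfl
    have hn1B : n + 1 ≤ B ^ 3 := by
      have : n + 1 ≤ B ^ 2 + B ^ 2 := by omega
      calc n + 1 ≤ 2 * B ^ 2 := by omega
        _ ≤ B * B ^ 2 := Nat.mul_le_mul_right _ hB2
        _ = B ^ 3 := by ring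
    calc Dbound l n N = (n + 1) * Δ * q := hDeq
      _ ≤ B ^ 3 * B ^ (6 * n) * B ^ 4 :=
          Nat.mul_le_mul (Nat.mul_le_mul hn1B hΔB) hqB
      _ = B ^ (6 * n + 7) := by rw [← pow_add, ← pow_add]; ring_nf
  set D : ℕ := Dbound l n N with hD
  have hFeq : Fbound l n N = n * Δ * (q * (n * D + 1)) + D := rfl
  have hinner : q * (n * D + 1) ≤ B ^ (6 * n + 14) := by
    have h1 : n * D ≤ B ^ (6 * n + 9) := by
      calc n * D ≤ B ^ 2 * B ^ (6 * n + 7) := Nat.mul_le_mul hnB hDB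
        _ = B ^ (6 * n + 9) := by rw [← pow_add]; ring_nf
    have h2 : n * D + 1 ≤ B ^ (6 * n + 10) := by
      have hp1 : 1 ≤ B ^ (6 * n + 9) := Nat.one_le_pow _ _ (by omega)
      calc n * D + 1 ≤ 2 * B ^ (6 * n + 9) := by omega
        _ ≤ B * B ^ (6 * n + 9) := Nat.mul_le_mul_right _ hB2
        _ = B ^ (6 * n + 10) := by rw [← pow_succ']
    calc q * (n * D + 1) ≤ B ^ 4 * B ^ (6 * n + 10) := Nat.mul_le_mul hqB h2
      _ = B ^ (6 * n + 14) := by rw [← pow_add]; ring_nf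
  calc Fbound l n N = n * Δ * (q * (n * D + 1)) + D := hFeq
    _ ≤ B ^ 2 * B ^ (6 * n) * B ^ (6 * n + 14) + B ^ (6 * n + 7) :=
        Nat.add_le_add (Nat.mul_le_mul (Nat.mul_le_mul hnB hΔB) hinner) hDB
    _ = B ^ (12 * n + 16) + B ^ (6 * n + 7) := by rw [← pow_add, ← pow_add]; ring_nf
    _ ≤ B ^ (12 * n + 16) + B ^ (12 * n + 16) := by
        refine Nat.add_le_add_left (Nat.pow_le_pow_right hB1 (by omega)) _
    _ = 2 * B ^ (12 * n + 16) := by ring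
    _ ≤ B * B ^ (12 * n + 16) := Nat.mul_le_mul_right _ hB2
    _ = B ^ (12 * n + 17) := by rw [← pow_succ']
    _ ≤ B ^ (100 * n) := Nat.pow_le_pow_right hB1 (by omega)


end SmallSol

/-- The maximum absolute value of an entry of A or b. -/
def maxEntry {l m : ℕ} (A : Matrix (Fin l) (Fin m) ℤ) (b : Fin l → ℤ) : ℕ :=
  max (Finset.univ.sup fun i => Finset.univ.sup fun j => (A i j).natAbs)
    (Finset.univ.sup fun i => (b i).natAbs)

/-- Minimal solutions of integer linear inequality systems are small: there is an absolute
constant c such that any solvable system Ax ≤ b over ℕ^m has a solution with entries bounded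
by (m·l·(M+1))^(c·(m+l)), where M is the maximum absolute value of the entries of A, b. -/
theorem small_solutions_exist :
    ∃ c : ℕ, ∀ (l m : ℕ) (A : Matrix (Fin l) (Fin m) ℤ) (b : Fin l → ℤ),
      (∃ x : Fin m → ℕ, ∀ i, (∑ j, A i j * (x j : ℤ)) ≤ b i) →
      ∃ x : Fin m → ℕ, (∀ i, (∑ j, A i j * (x j : ℤ)) ≤ b i) ∧
        ∀ j, x j ≤ (m * l * (maxEntry A b + 1)) ^ (c * (m + l)) := by
  classical
  refine ⟨100, ?_⟩
  rintro l m A b ⟨x₀, hx₀⟩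
  by_cases hm : m = 0
  · exact ⟨x₀, hx₀, fun j => absurd j.2 (by omega)⟩
  by_cases hl : l = 0
  · refine ⟨fun _ => 0, fun i => absurd i.2 (by omega), fun j => Nat.zero_le _⟩
  set M : ℕ := maxEntry A b with hMdef
  have hA : ∀ i j, (A i j).natAbs ≤ M := by
    intro i j
    refine le_trans ?_ (le_max_left _ _)
    exact le_trans (Finset.le_sup (f := fun j => (A i j).natAbs) (Finset.mem_univ j))
      (Finset.le_sup (f := fun i => Finset.univ.sup fun j => (A i j).natAbs)
        (Finset.mem_univ i))
  have hbM : ∀ i, (b i).natAbs ≤ M := fun i =>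
    le_trans (Finset.le_sup (f := fun i => (b i).natAbs) (Finset.mem_univ i))
      (le_max_right _ _)
  by_cases hM0 : M = 0
  · refine ⟨fun _ => 0, fun i => ?_, fun j => Nat.zero_le _⟩
    have hbi : b i = 0 := by
      have := hbM i
      rw [hM0] at this
      exact Int.natAbs_eq_zero.mp (Nat.le_zero.mp this)
    have hAi : ∀ j, A i j = 0 := by
      intro j
      have := hA i j
      rw [hM0] at this
      exact Int.natAbs_eq_zero.mp (Nat.le_zero.mp this)
    simp [hAi, hbi]
  -- main case: build the slack system
  set N : ℕ := M + 1 with hN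
  set C : Matrix (Fin l) (Fin (m + l)) ℤ :=
    Matrix.of fun i => Fin.append (A i) (fun k : Fin l => if k = i then 1 else 0) with hCdef
  have hC : ∀ i j, (C i j).natAbs ≤ N := by
    intro i j
    induction j using Fin.addCases with
    | left j =>
      have hCl : C i (Fin.castAdd l j) = A i j := by
        simp only [hCdef, Matrix.of_apply, Fin.append_left]
      rw [hCl]
      exact le_trans (hA i j) (Nat.le_succ M)
    | right k =>
      have hCr : C i (Fin.natAdd m k) = if k = i then 1 else 0 := by
        simp only [hCdef, Matrix.of_apply, Fin.append_right]
      rw [hCr]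
      by_cases hk : k = i <;> simp [hk] <;> omega
  have hb : ∀ i, (b i).natAbs ≤ N := fun i => le_trans (hbM i) (Nat.le_succ M)
  set y₀ : Fin l → ℕ := fun i => (b i - ∑ j, A i j * (x₀ j : ℤ)).toNat with hy₀
  have hy₀cast : ∀ i, ((y₀ i : ℕ) : ℤ) = b i - ∑ j, A i j * (x₀ j : ℤ) := by
    intro i
    rw [hy₀, Int.toNat_of_nonneg (by have := hx₀ i; omega)]
  have hsol_eq : ∃ z : Fin (m + l) → ℕ, ∀ i, (∑ j, C i j * (z j : ℤ)) = b i := by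
    refine ⟨Fin.append x₀ y₀, fun i => ?_⟩
    rw [Fin.sum_univ_add (f := fun j => C i j * ((Fin.append x₀ y₀ j : ℕ) : ℤ))]
    have h1 : ∀ j : Fin m, C i (Fin.castAdd l j) * ((Fin.append x₀ y₀ (Fin.castAdd l j) : ℕ) : ℤ)
        = A i j * (x₀ j : ℤ) := by
      intro j
      have hCl : C i (Fin.castAdd l j) = A i j := by
        simp only [hCdef, Matrix.of_apply, Fin.append_left]
      rw [hCl, Fin.append_left x₀ y₀ j]
    have h2 : ∀ k : Fin l, C i (Fin.natAdd m k) * ((Fin.append x₀ y₀ (Fin.natAdd m k) : ℕ) : ℤ)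
        = (if k = i then 1 else 0) * ((y₀ k : ℕ) : ℤ) := by
      intro k
      have hCr : C i (Fin.natAdd m k) = if k = i then 1 else 0 := by
        simp only [hCdef, Matrix.of_apply, Fin.append_right]
      rw [hCr, Fin.append_right x₀ y₀ k]
    rw [Finset.sum_congr rfl fun j _ => h1 j, Finset.sum_congr rfl fun k _ => h2 k]
    have h3 : ∑ k : Fin l, (if k = i then (1:ℤ) else 0) * ((y₀ k : ℕ) : ℤ) = ((y₀ i : ℕ) : ℤ) := by
      rw [Finset.sum_eq_single i]
      · simp
      · intro k _ hk
        simp [hk]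
      · intro h
        exact absurd (Finset.mem_univ i) h
    rw [h3, hy₀cast i]
    ring
  obtain ⟨z, hzsol, hzbd⟩ := SmallSol.main_eq C b N hC hb hsol_eq
  refine ⟨fun j => z (Fin.castAdd l j), fun i => ?_, fun j => ?_⟩
  · have heq := hzsol i
    rw [Fin.sum_univ_add (f := fun j => C i j * ((z j : ℕ) : ℤ))] at heq
    have h1 : ∀ j : Fin m, C i (Fin.castAdd l j) * ((z (Fin.castAdd l j) : ℕ) : ℤ)
        = A i j * ((z (Fin.castAdd l j) : ℕ) : ℤ) := by
      intro j
      have hCl : C i (Fin.castAdd l j) = A i j := by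
        simp only [hCdef, Matrix.of_apply, Fin.append_left]
      rw [hCl]
    have h2 : ∀ k : Fin l, C i (Fin.natAdd m k) * ((z (Fin.natAdd m k) : ℕ) : ℤ)
        = (if k = i then 1 else 0) * ((z (Fin.natAdd m k) : ℕ) : ℤ) := by
      intro k
      have hCr : C i (Fin.natAdd m k) = if k = i then 1 else 0 := by
        simp only [hCdef, Matrix.of_apply, Fin.append_right]
      rw [hCr]
    rw [Finset.sum_congr rfl fun j _ => h1 j, Finset.sum_congr rfl fun k _ => h2 k] at heq
    have h3 : ∑ k : Fin l, (if k = i then (1:ℤ) else 0) * ((z (Fin.natAdd m k) : ℕ) : ℤ)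
        = ((z (Fin.natAdd m i) : ℕ) : ℤ) := by
      rw [Finset.sum_eq_single i]
      · simp
      · intro k _ hk
        simp [hk]
      · intro h
        exact absurd (Finset.mem_univ i) h
    rw [h3] at heq
    have hpos : (0:ℤ) ≤ ((z (Fin.natAdd m i) : ℕ) : ℤ) := Int.ofNat_nonneg _
    have hgoal : (∑ j, A i j * ((z (Fin.castAdd l j) : ℕ) : ℤ)) ≤ b i := by omega
    exact hgoal
  · refine le_trans (hzbd _) ?_
    have hM1 : 1 ≤ M := by omega
    exact SmallSol.Fbound_le m l M (by omega) (by omega) hM1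
end
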